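/- arXiv:2602.17344 — 7 statements merged into one kernel-verified Lean document; each statement's English description precedes it below -/
import Mathlib

section
/- Let d = 2. For all η ∈ S_{e_2} and σ ∈ Σ2 with η ≠ σ, the coupling set of y := η − σ is: F_y = {η − H_ν σ, H_ν η − σ} if η ∈ (−Σ2) ∩ S_{e_2} and σ ∈ Σ2 ∩ S_{−e_2}, and F_y = {η − H_ν σ} otherwise. -/
open Set MeasureTheory
open scoped RealInnerProductSpace

noncomputable section

abbrev Euc (d : ℕ) := EuclideanSpace ℝ (Fin d)

/-- Reflection across the hyperplane `ν^⊥` (Householder transform). -/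
def Hr {d : ℕ} (ν x : Euc d) : Euc d := x - (2 * ⟪x, ν⟫) • ν

/-- Open hemisphere of radius `k0` in direction `v`. -/
def Shemi {d : ℕ} (k0 : ℝ) (v : Euc d) : Set (Euc d) := {x | ‖x‖ = k0 ∧ 0 < ⟪x, v⟫}

def Sig1 {d : ℕ} (k0 : ℝ) (ν ω : Euc d) : Set (Euc d) :=
  {σ | σ ∈ Shemi k0 ω ∧ Hr ν σ ∉ Shemi k0 ω}

def Sig2 {d : ℕ} (k0 : ℝ) (ν ω : Euc d) : Set (Euc d) :=
  {σ | σ ∈ Shemi k0 ω ∧ Hr ν σ ∈ Shemi k0 ω}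

def Y1set {d : ℕ} (k0 : ℝ) (ν ω e : Euc d) : Set (Euc d) :=
  {y | ∃ η ∈ Shemi k0 e, ∃ σ ∈ Sig1 k0 ν ω, y = η - σ}

def Y2set {d : ℕ} (k0 : ℝ) (ν ω e : Euc d) : Set (Euc d) :=
  {y | ∃ η ∈ Shemi k0 e, ∃ σ ∈ Sig2 k0 ν ω, y = η - σ}

def Sig2chi {d : ℕ} (k0 χ : ℝ) (ν ω : Euc d) : Set (Euc d) :=
  {x | ∃ σ ∈ Sig2 k0 ν ω, ∃ t ∈ Set.Ioo (1 - χ) (1 + χ), x = t • σ}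

/-- The hypotheses on the coefficient function `b`. -/
def BHyp {d : ℕ} (k0 χ : ℝ) (ν ω : Euc d) (b : Euc d → ℂ) : Prop :=
  (∀ x ∈ Sig2chi k0 χ ν ω, b x ≠ 0) ∧
  ∀ σ ∈ Sig2 k0 ν ω, ∀ t ∈ Set.Ioo (1 - χ) (1 + χ), b (t • σ) = b σ

/-- `g` solves the homogeneous system. -/
def SolvesHom {d : ℕ} (k0 : ℝ) (ν ω e : Euc d) (b g : Euc d → ℂ) : Prop :=
  ∀ η ∈ Shemi k0 e,
    (∀ σ ∈ Sig1 k0 ν ω, g (η - σ) = 0) ∧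
    ∀ σ ∈ Sig2 k0 ν ω, b σ * g (η - σ) + g (η - Hr ν σ) = 0

/-- The coupling set `F_y`. -/
def Fcoup {d : ℕ} (k0 : ℝ) (ν ω e : Euc d) (y : Euc d) : Set (Euc d) :=
  {z | ∃ η ∈ Shemi k0 e, ∃ σ ∈ Sig2 k0 ν ω, y = η - σ ∧ z = η - Hr ν σ}

/-- The set `C_{y,λ}`. -/
def Cset {d : ℕ} (k0 : ℝ) (ν ω e : Euc d) (y : Euc d) (lam : ℝ) : Set (Euc d) :=
  {σ | σ ∈ Sig2 k0 ν ω ∧ σ + y ∈ Shemi k0 e ∧ ⟪σ, ν⟫ = lam}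

/-- The `d`-th standard basis vector. -/
def eLast (d : ℕ) (hd : 0 < d) : Euc d :=
  EuclideanSpace.single ⟨d - 1, Nat.sub_lt hd one_pos⟩ 1

def e2 : Euc 2 := EuclideanSpace.single 1 1
def e3 : Euc 3 := EuclideanSpace.single 2 1

/-- Degenerate points. -/
def degS {d : ℕ} (k0 : ℝ) (ν ω e : Euc d) : Set (Euc d) :=
  {y | ∃ η ∈ Shemi k0 e, ∃ σ ∈ Sig2 k0 ν ω, (⟪η, ν⟫ = 0 ∨ ⟪σ, ν⟫ = 0) ∧ y = η - σ}

/-- Non-degenerate points `Y2'`. -/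
def Y2nd {d : ℕ} (k0 : ℝ) (ν ω e : Euc d) : Set (Euc d) :=
  (Y2set k0 ν ω e ∩ {x | ‖x‖ < 2 * k0}) \
    (degS k0 ν ω e ∪ {x | ⟪x, ν⟫ = 0} ∪ {x | ∃ t : ℝ, x = t • ν})

/-- The set `Ỹ`. -/
def Ytil {d : ℕ} (k0 : ℝ) (ν ω e : Euc d) : Set (Euc d) :=
  {y | ∃ η ∈ Shemi k0 e, -η ∈ Sig1 k0 ν ω ∧
    ∃ σ ∈ Sig2 k0 ν ω, σ ∈ Shemi k0 (-e) ∧ Hr ν σ ∉ Shemi k0 (-e) ∧ y = η - Hr ν σ}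

/-- Cross product on `Euc 3`. -/
def cross3 (a b : Euc 3) : Euc 3 :=
  (EuclideanSpace.equiv (Fin 3) ℝ).symm
    ![a 1 * b 2 - a 2 * b 1, a 2 * b 0 - a 0 * b 2, a 0 * b 1 - a 1 * b 0]

end

lemma key_scalar (k a b c d p q r s : ℝ)
    (h1 : a^2+b^2 = k^2) (h2 : c^2+d^2 = k^2) (h3 : p^2+q^2 = k^2) (h4 : r^2+s^2 = k^2)
    (h5 : p - r = a - c) (h6 : q - s = b - d)
    (hne : ¬(a = c ∧ b = d)) :
    (p = a ∧ q = b ∧ r = c ∧ s = d) ∨ (p = -c ∧ q = -d ∧ r = -a ∧ s = -b) := by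
  have he1 : 2*a*(p-a) + 2*b*(q-b) + (p-a)^2 + (q-b)^2 = 0 := by linear_combination h3 - h1
  have he2 : 2*c*(p-a) + 2*d*(q-b) + (p-a)^2 + (q-b)^2 = 0 := by
    linear_combination h4 - h2 + (r + p - a + c) * h5 + (s + q - b + d) * h6
  have he3 : (a-c)*(p-a) + (b-d)*(q-b) = 0 := by linear_combination (he1 - he2)/2
  have hG : a^2+b^2 = c^2+d^2 := by linear_combination h1 - h2
  have hu : (p-a) * (((a-c)^2+(b-d)^2)*(p-a) - (b-d)*(2*(a*d-b*c))) = 0 := by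
    linear_combination (b-d)^2 * he1
      - (2*b*(b-d) + ((a-c)*(p-a)+(b-d)*(q-b)) - 2*(a-c)*(p-a)) * he3
  have hv : (q-b) * (((a-c)^2+(b-d)^2)*(q-b) + (a-c)*(2*(a*d-b*c))) = 0 := by
    linear_combination (a-c)^2 * he1
      - (2*a*(a-c) + ((a-c)*(p-a)+(b-d)*(q-b)) - 2*(b-d)*(q-b)) * he3
  by_cases h0 : p - a = 0 ∧ q - b = 0
  · left
    have hp : p = a := by linarith [h0.1]
    have hq : q = b := by linarith [h0.2]
    exact ⟨hp, hq, by linarith, by linarith⟩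
  · right
    have hpq : p = -c ∧ q = -d := by
      rcases mul_eq_zero.mp hu with hu0 | huE <;> rcases mul_eq_zero.mp hv with hv0 | hvE
      · exact absurd ⟨hu0, hv0⟩ h0
      · -- p = a, second branch for v
        have hvne : q - b ≠ 0 := fun h => h0 ⟨hu0, h⟩
        have hbd : b = d := by
          have h' : (b - d) * (q - b) = 0 := by linear_combination he3 - (a-c)*hu0
          have := (mul_eq_zero.mp h').resolve_right hvne
          linarith
        have hac : a ≠ c := fun h => hne ⟨h, hbd⟩
        have hac2 : a = -c := by
          have h' : (a - c) * (a + c) = 0 := by linear_combination hG - (b+d)*hbd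
          rcases mul_eq_zero.mp h' with h | h
          · exact absurd (by linarith) hac
          · linarith
        have hv2 : q - b = -2*b := by
          have h' : (a-c)^2 * ((q-b) + 2*b) = 0 := by
            linear_combination hvE + (2*a*(a-c) - (b-d)*(q-b)) * hbd
          have hne2 : (a-c)^2 ≠ 0 := pow_ne_zero 2 (sub_ne_zero.mpr hac)
          have := (mul_eq_zero.mp h').resolve_left hne2
          linarith
        exact ⟨by linarith, by linarith⟩
      · -- q = b, second branch for u
        have hune : p - a ≠ 0 := fun h => h0 ⟨h, hv0⟩
        have hac : a = c := by
          have h' : (a - c) * (p - a) = 0 := by linear_combination he3 - (b-d)*hv0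
          have := (mul_eq_zero.mp h').resolve_right hune
          linarith
        have hbd : b ≠ d := fun h => hne ⟨hac, h⟩
        have hbd2 : b = -d := by
          have h' : (b - d) * (b + d) = 0 := by linear_combination hG - (a+c)*hac
          rcases mul_eq_zero.mp h' with h | h
          · exact absurd (by linarith) hbd
          · linarith
        have hu2 : p - a = -2*c := by
          have h' : (b-d)^2 * ((p-a) + 2*c) = 0 := by
            linear_combination huE + (2*d*(b-d) - (a-c)*(p-a)) * hac
          have hne2 : (b-d)^2 ≠ 0 := pow_ne_zero 2 (sub_ne_zero.mpr hbd)
          have := (mul_eq_zero.mp h').resolve_left hne2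
          linarith
        exact ⟨by linarith, by linarith⟩
      · -- both second branches
        have hW : (a-c)^2+(b-d)^2 ≠ 0 := by
          intro h
          have hA := sq_nonneg (a-c)
          have hB := sq_nonneg (b-d)
          have h1' : a - c = 0 := by
            have : (a-c)^2 = 0 := by linarith only [h, hA, hB]
            exact pow_eq_zero_iff two_ne_zero |>.mp this
          have h2' : b - d = 0 := by
            have : (b-d)^2 = 0 := by linarith only [h, hA, hB]
            exact pow_eq_zero_iff two_ne_zero |>.mp this
          exact hne ⟨by linarith only [h1'], by linarith only [h2']⟩
        constructor
        · have h' : ((a-c)^2+(b-d)^2) * (p + c) = 0 := by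
            linear_combination huE + (a-c)*hG
          have := (mul_eq_zero.mp h').resolve_left hW
          linarith
        · have h' : ((a-c)^2+(b-d)^2) * (q + d) = 0 := by
            linear_combination hvE + (b-d)*hG
          have := (mul_eq_zero.mp h').resolve_left hW
          linarith
    exact ⟨hpq.1, hpq.2, by linarith [hpq.1, h5], by linarith [hpq.2, h6]⟩

lemma normsq2 (x : Euc 2) : x 0 ^ 2 + x 1 ^ 2 = ‖x‖ ^ 2 := by
  rw [EuclideanSpace.norm_eq, Real.sq_sqrt (by positivity)]
  simp [Fin.sum_univ_two, Real.norm_eq_abs, sq_abs]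

lemma euc2_ext {x y : Euc 2} (h0 : x 0 = y 0) (h1 : x 1 = y 1) : x = y := by
  ext i; fin_cases i <;> assumption

lemma Hr_neg {ν x : Euc 2} : Hr ν (-x) = -(Hr ν x) := by
  unfold Hr; rw [inner_neg_left]; module

lemma key_vec (k0 : ℝ) (η σ η' σ' : Euc 2)
    (hη : ‖η‖ = k0) (hσ : ‖σ‖ = k0) (hη' : ‖η'‖ = k0) (hσ' : ‖σ'‖ = k0)
    (hy : η' - σ' = η - σ) (hne : η ≠ σ) :
    (η' = η ∧ σ' = σ) ∨ (η' = -σ ∧ σ' = -η) := by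
  have h5 : η' 0 - σ' 0 = η 0 - σ 0 := by
    have := congrArg (fun x : Euc 2 => x 0) hy; simpa using this
  have h6 : η' 1 - σ' 1 = η 1 - σ 1 := by
    have := congrArg (fun x : Euc 2 => x 1) hy; simpa using this
  have hnec : ¬(η 0 = σ 0 ∧ η 1 = σ 1) := fun ⟨h0, h1⟩ => hne (euc2_ext h0 h1)
  have hk := key_scalar k0 (η 0) (η 1) (σ 0) (σ 1) (η' 0) (η' 1) (σ' 0) (σ' 1)
    (by rw [normsq2, hη]) (by rw [normsq2, hσ]) (by rw [normsq2, hη'])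
    (by rw [normsq2, hσ']) h5 h6 hnec
  rcases hk with ⟨hp, hq, hr, hs⟩ | ⟨hp, hq, hr, hs⟩
  · exact Or.inl ⟨euc2_ext hp hq, euc2_ext hr hs⟩
  · exact Or.inr ⟨euc2_ext hp hq, euc2_ext hr hs⟩


/-- the coupling set in two dimensions. -/
theorem stmt2 (k0 : ℝ) (hk0 : 0 < k0)
    (ν ω : Euc 2) (hν : ‖ν‖ = 1) (hω : ‖ω‖ = 1)
    (η σ : Euc 2) (hη : η ∈ Shemi k0 e2) (hσ : σ ∈ Sig2 k0 ν ω) (hne : η ≠ σ) :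
    ((-η ∈ Sig2 k0 ν ω ∧ σ ∈ Shemi k0 (-e2)) →
      Fcoup k0 ν ω e2 (η - σ) = {η - Hr ν σ, Hr ν η - σ}) ∧
    (¬(-η ∈ Sig2 k0 ν ω ∧ σ ∈ Shemi k0 (-e2)) →
      Fcoup k0 ν ω e2 (η - σ) = {η - Hr ν σ}) := by
  constructor
  · intro hc
    ext z
    simp only [Fcoup, Set.mem_setOf_eq, Set.mem_insert_iff, Set.mem_singleton_iff]
    constructor
    · rintro ⟨η', hη', σ', hσ', hyz, rfl⟩
      rcases key_vec k0 η σ η' σ' hη.1 hσ.1.1 hη'.1 hσ'.1.1 hyz.symm hne with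
        ⟨h1, h2⟩ | ⟨h1, h2⟩
      · left; rw [h1, h2]
      · right; rw [h1, h2, Hr_neg]; abel
    · rintro (rfl | rfl)
      · exact ⟨η, hη, σ, hσ, rfl, rfl⟩
      · refine ⟨-σ, ⟨by rw [norm_neg]; exact hσ.1.1, ?_⟩, -η, hc.1, by abel, by rw [Hr_neg]; abel⟩
        have := hc.2.2
        rwa [inner_neg_right, ← inner_neg_left] at this
  · intro hnc
    ext z
    simp only [Fcoup, Set.mem_setOf_eq, Set.mem_singleton_iff]
    constructor
    · rintro ⟨η', hη', σ', hσ', hyz, rfl⟩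
      rcases key_vec k0 η σ η' σ' hη.1 hσ.1.1 hη'.1 hσ'.1.1 hyz.symm hne with
        ⟨h1, h2⟩ | ⟨h1, h2⟩
      · rw [h1, h2]
      · exfalso
        apply hnc
        refine ⟨h2 ▸ hσ', hσ.1.1, ?_⟩
        have := (h1 ▸ hη' : (-σ : Euc 2) ∈ Shemi k0 e2).2
        rwa [inner_neg_left, ← inner_neg_right] at this
    · rintro rfl
      exact ⟨η, hη, σ, hσ, rfl, rfl⟩
end

section
/- Let d = 2 and let y ∈ Y2' be written as y = η − σ with η ∈ S_{e_2} and σ ∈ Σ2. Then the four points η − σ, H_ν η − σ, η − H_ν σ, and H_ν η − H_ν σ are pairwise distinct and all nonzero. -/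
open Set MeasureTheory
open scoped RealInnerProductSpace

private lemma stmt3_aux (y ν u : Euc 2) (hu : u ≠ 0) (h1 : ⟪y,u⟫ = 0) (h2 : ⟪ν,u⟫ = 0)
    (hν : ‖ν‖ = 1) : ∃ t : ℝ, y = t • ν := by
  have hν2 : ν 0 * ν 0 + ν 1 * ν 1 = 1 := by
    have h := real_inner_self_eq_norm_sq ν
    rw [hν] at h
    simp only [PiLp.inner_apply, RCLike.inner_apply, conj_trivial, Fin.sum_univ_two, one_pow] at h
    linarith [h]
  simp only [PiLp.inner_apply, RCLike.inner_apply, conj_trivial, Fin.sum_univ_two] at h1 h2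
  have hu' : u 0 ≠ 0 ∨ u 1 ≠ 0 := by
    by_contra hc
    push_neg at hc
    apply hu
    ext i
    fin_cases i <;> simp [hc.1, hc.2]
  have hdet : y 0 * ν 1 - y 1 * ν 0 = 0 := by
    rcases hu' with h | h
    · have : u 0 * (y 0 * ν 1 - y 1 * ν 0) =
        ν 1 * (y 0 * u 0 + y 1 * u 1) - y 1 * (ν 0 * u 0 + ν 1 * u 1) := by ring
      rw [show y 0 * u 0 + y 1 * u 1 = 0 by linarith [h1], show ν 0 * u 0 + ν 1 * u 1 = 0 by linarith [h2]] at this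
      simp only [mul_zero, sub_zero] at this
      exact (mul_eq_zero.mp this).resolve_left h
    · have : u 1 * (y 0 * ν 1 - y 1 * ν 0) =
        y 0 * (ν 0 * u 0 + ν 1 * u 1) - ν 0 * (y 0 * u 0 + y 1 * u 1) := by ring
      rw [show y 0 * u 0 + y 1 * u 1 = 0 by linarith [h1], show ν 0 * u 0 + ν 1 * u 1 = 0 by linarith [h2]] at this
      simp only [mul_zero, sub_zero] at this
      exact (mul_eq_zero.mp this).resolve_left h
  refine ⟨y 0 * ν 0 + y 1 * ν 1, ?_⟩
  ext i
  fin_cases i <;> simp [PiLp.smul_apply, smul_eq_mul]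
  · linear_combination ν 1 * hdet - y 0 * hν2
  · linear_combination -(ν 0) * hdet - y 1 * hν2

/-- for non-degenerate points, the four involved points are distinct and nonzero. -/
theorem stmt3 (k0 : ℝ) (hk0 : 0 < k0)
    (ν ω : Euc 2) (hν : ‖ν‖ = 1) (hω : ‖ω‖ = 1)
    (η σ : Euc 2) (hη : η ∈ Shemi k0 e2) (hσ : σ ∈ Sig2 k0 ν ω)
    (hy : η - σ ∈ Y2nd k0 ν ω e2) :
    η - σ ≠ 0 ∧ Hr ν η - σ ≠ 0 ∧ η - Hr ν σ ≠ 0 ∧ Hr ν η - Hr ν σ ≠ 0 ∧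
    η - σ ≠ Hr ν η - σ ∧ η - σ ≠ η - Hr ν σ ∧ η - σ ≠ Hr ν η - Hr ν σ ∧
    Hr ν η - σ ≠ η - Hr ν σ ∧ Hr ν η - σ ≠ Hr ν η - Hr ν σ ∧
    η - Hr ν σ ≠ Hr ν η - Hr ν σ := by
  have hν0 : ν ≠ 0 := by
    intro h; rw [h, norm_zero] at hν; exact one_ne_zero hν.symm
  obtain ⟨⟨_, hnorm⟩, hnot⟩ := hy
  have h2 : ¬((η - σ) ∈ degS k0 ν ω e2 ∨ (⟪η - σ, ν⟫ = 0) ∨ ∃ t : ℝ, η - σ = t • ν) := by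
    intro h
    rcases h with h | h | h
    exacts [hnot (Or.inl (Or.inl h)), hnot (Or.inl (Or.inr h)), hnot (Or.inr h)]
  push_neg at h2
  obtain ⟨hdegS, hyν, hray⟩ := h2
  have hην : ⟪η, ν⟫ ≠ 0 := fun h => hdegS ⟨η, hη, σ, hσ, Or.inl h, rfl⟩
  have hσν : ⟪σ, ν⟫ ≠ 0 := fun h => hdegS ⟨η, hη, σ, hσ, Or.inr h, rfl⟩
  have hηn : ‖η‖ = k0 := hη.1
  have hσn : ‖σ‖ = k0 := hσ.1.1
  -- key: fixed points of the reflection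
  have key : ∀ x : Euc 2, Hr ν x = x → ⟪x, ν⟫ = 0 := by
    intro x hx
    unfold Hr at hx
    rw [sub_eq_self] at hx
    rcases smul_eq_zero.mp hx with h | h
    · linarith [h]
    · exact absurd h hν0
  refine ⟨?_, ?_, ?_, ?_, ?_, ?_, ?_, ?_, ?_, ?_⟩
  · intro h
    exact hray 0 (by rw [h]; simp)
  · intro h
    refine hray (2 * ⟪η, ν⟫) ?_
    rw [← sub_eq_zero]
    calc η - σ - (2 * ⟪η, ν⟫) • ν = Hr ν η - σ := by unfold Hr; abel
    _ = 0 := h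
  · intro h
    refine hray (-(2 * ⟪σ, ν⟫)) ?_
    rw [← sub_eq_zero]
    calc η - σ - (-(2 * ⟪σ, ν⟫)) • ν = η - Hr ν σ := by unfold Hr; module
    _ = 0 := h
  · intro h
    refine hray (2 * ⟪η, ν⟫ - 2 * ⟪σ, ν⟫) ?_
    rw [← sub_eq_zero]
    calc η - σ - (2 * ⟪η, ν⟫ - 2 * ⟪σ, ν⟫) • ν = Hr ν η - Hr ν σ := by unfold Hr; module
    _ = 0 := h
  · intro h
    have hη' : Hr ν η = η := by
      have := sub_left_injective h.symm
      exact this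
    exact hην (key η hη')
  · intro h
    have hσ' : Hr ν σ = σ := by
      have := sub_right_injective h.symm
      exact this
    exact hσν (key σ hσ')
  · intro h
    have hfix : Hr ν (η - σ) = η - σ := by
      calc Hr ν (η - σ) = Hr ν η - Hr ν σ - (2 * ⟪η - σ, ν⟫ - 2 * ⟪η, ν⟫ + 2 * ⟪σ, ν⟫) • ν := by
            unfold Hr; module
      _ = η - σ - (2 * ⟪η - σ, ν⟫ - 2 * ⟪η, ν⟫ + 2 * ⟪σ, ν⟫) • ν := by rw [← h]
      _ = η - σ := by
            rw [inner_sub_left]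
            ring_nf
            simp
    exact hyν (key _ hfix)
  · intro h
    -- hard case : ⟪η+σ, ν⟫ = 0
    have h0 : (2 * ⟪η, ν⟫ + 2 * ⟪σ, ν⟫) • ν = 0 := by
      rw [← sub_eq_zero] at h
      calc (2 * ⟪η, ν⟫ + 2 * ⟪σ, ν⟫) • ν = -(Hr ν η - σ - (η - Hr ν σ)) := by unfold Hr; module
      _ = 0 := by rw [h, neg_zero]
    have hab : ⟪η, ν⟫ + ⟪σ, ν⟫ = 0 := by
      rcases smul_eq_zero.mp h0 with h' | h'
      · linarith [h']
      · exact absurd h' hν0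
    by_cases hu : η + σ = 0
    · have hσ' : σ = -η := eq_neg_of_add_eq_zero_right hu
      rw [hσ', sub_neg_eq_add] at hnorm
      have : ‖η + η‖ = 2 * k0 := by
        rw [← two_smul ℝ η, norm_smul, hηn]
        simp
      have hn2 : ‖η + η‖ < 2 * k0 := hnorm
      linarith
    · have hyu : ⟪η - σ, η + σ⟫ = 0 := by
        rw [inner_sub_left, inner_add_right, inner_add_right,
          real_inner_self_eq_norm_sq, real_inner_self_eq_norm_sq, hηn, hσn,
          real_inner_comm σ η]
        ring
      have hνu : ⟪ν, η + σ⟫ = 0 := by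
        rw [inner_add_right]
        have c1 := real_inner_comm ν η
        have c2 := real_inner_comm ν σ
        linarith
      obtain ⟨t, ht⟩ := stmt3_aux (η - σ) ν (η + σ) hu hyu hνu hν
      exact hray t ht
  · intro h
    have hσ' : Hr ν σ = σ := (sub_right_injective h).symm
    exact hσν (key σ hσ')
  · intro h
    have hη' : Hr ν η = η := (sub_left_injective h).symm
    exact hην (key η hη')
end

section
/- Let d > 2. For every y ∈ ℝ^d, the coupling set F_y is contained in the closed line segment L_y = {y + 2λν : λ ∈ Λ_y}, where Λ_y = {⟨σ, ν⟩ : σ ∈ S(k0) with σ + y ∈ S(k0)}, and F_y is a relatively open subset of L_y (open in the subspace topology of L_y). -/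
open Set MeasureTheory
open scoped RealInnerProductSpace

section AuxStmt4
open scoped RealInnerProductSpace
open Set

lemma aux_exists_ortho {d : ℕ} (hd : 2 < d) (a b : Euc d) :
    ∃ v : Euc d, v ≠ 0 ∧ ⟪a, v⟫ = 0 ∧ ⟪b, v⟫ = 0 := by
  classical
  set K : Submodule ℝ (Euc d) := Submodule.span ℝ {a, b} with hK
  have h2 : Module.finrank ℝ K ≤ 2 := by
    refine (finrank_span_le_card _).trans ?_
    have : ({a, b} : Set (Euc d)).toFinset = {a, b} := by simp
    rw [this]
    exact (Finset.card_insert_le _ _).trans (by simp)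
  have hKb : Kᗮ ≠ ⊥ := by
    intro h
    have h3 := Submodule.finrank_add_finrank_orthogonal K
    rw [h, finrank_bot, finrank_euclideanSpace_fin] at h3
    omega
  obtain ⟨v, hvK, hv0⟩ := Submodule.exists_mem_ne_zero_of_ne_bot hKb
  have hmem := (Submodule.mem_orthogonal K v).mp hvK
  exact ⟨v, hv0, hmem a (Submodule.subset_span (by simp)),
    hmem b (Submodule.subset_span (by simp))⟩

lemma aux_core0 {d : ℕ} (hd : 2 < d) (ν y : Euc d) (R2 : ℝ) (U : Set (Euc d)) (hU : IsOpen U)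
    (u0 : Euc d) (h0U : u0 ∈ U) (h0y : ⟪u0, y⟫ = 0) (h0n : ‖u0‖ ^ 2 = R2) :
    ∃ ε > 0, ∀ u1 : Euc d, ⟪u1, y⟫ = 0 → ‖u1‖ ^ 2 = R2 → |⟪u1, ν⟫ - ⟪u0, ν⟫| < ε →
      ∃ u : Euc d, ⟪u, y⟫ = 0 ∧ ‖u‖ ^ 2 = R2 ∧ u ∈ U ∧ ⟪u, ν⟫ = ⟪u1, ν⟫ := by
  set w : Euc d := ν - (⟪ν, y⟫ / ‖y‖ ^ 2) • y with hw
  have hwy : ⟪w, y⟫ = 0 := by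
    by_cases hy : y = 0
    · simp [hw, hy]
    · have hyn : ‖y‖ ^ 2 ≠ 0 := pow_ne_zero 2 (norm_ne_zero_iff.mpr hy)
      rw [hw, inner_sub_left, real_inner_smul_left, real_inner_self_eq_norm_sq,
        div_mul_cancel₀ _ hyn, sub_self]
  have hkey : ∀ u : Euc d, ⟪u, y⟫ = 0 → ⟪u, ν⟫ = ⟪u, w⟫ := by
    intro u hu
    rw [hw, inner_sub_right, real_inner_smul_right, hu]
    ring
  by_cases hw0 : w = 0
  · refine ⟨1, one_pos, fun u1 h1y h1n _ => ⟨u0, h0y, h0n, h0U, ?_⟩⟩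
    rw [hkey u0 h0y, hkey u1 h1y, hw0, inner_zero_right, inner_zero_right]
  · have hnw : (0 : ℝ) < ‖w‖ := norm_pos_iff.mpr hw0
    set W : Euc d := ‖w‖⁻¹ • w with hWdef
    have hWn : ‖W‖ = 1 := by
      rw [hWdef, norm_smul, Real.norm_eq_abs, abs_of_pos (inv_pos.mpr hnw),
        inv_mul_cancel₀ hnw.ne']
    have hWW : ⟪W, W⟫ = 1 := by rw [real_inner_self_eq_norm_sq, hWn]; norm_num
    have hWy : ⟪W, y⟫ = 0 := by rw [hWdef, real_inner_smul_left, hwy, mul_zero]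
    have hWw : ⟪W, w⟫ = ‖w‖ := by
      rw [hWdef, real_inner_smul_left, real_inner_self_eq_norm_sq]
      field_simp
    have hinner : ∀ u : Euc d, ⟪u, w⟫ = ‖w‖ * ⟪u, W⟫ := by
      intro u
      rw [hWdef, real_inner_smul_right]
      field_simp
    set s0 : ℝ := ⟪u0, W⟫ with hs0def
    set p : Euc d := u0 - s0 • W with hpdef
    have hpW : ⟪p, W⟫ = 0 := by
      rw [hpdef, inner_sub_left, real_inner_smul_left, hWW]
      simp [hs0def]
    have hpn : ‖p‖ ^ 2 = R2 - s0 ^ 2 := by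
      rw [hpdef, norm_sub_sq_real, real_inner_smul_right, norm_smul, Real.norm_eq_abs]
      rw [← hs0def, h0n, hWn]
      ring_nf
      rw [sq_abs]
      ring
    have hpy : ⟪p, y⟫ = 0 := by
      rw [hpdef, inner_sub_left, real_inner_smul_left, h0y, hWy]
      ring
    have hpw : ⟪p, w⟫ = 0 := by rw [hinner, hpW, mul_zero]
    have hs0R : s0 ^ 2 ≤ R2 := by nlinarith [sq_nonneg ‖p‖]
    -- choose q
    have hq : ∃ q : Euc d, ‖q‖ = 1 ∧ ⟪q, y⟫ = 0 ∧ ⟪q, w⟫ = 0 ∧ p = ‖p‖ • q := by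
      by_cases hp : p = 0
      · obtain ⟨v, hv0, hvy, hvw⟩ := aux_exists_ortho hd y w
        have hvn : (0 : ℝ) < ‖v‖ := norm_pos_iff.mpr hv0
        refine ⟨‖v‖⁻¹ • v, ?_, ?_, ?_, ?_⟩
        · rw [norm_smul, Real.norm_eq_abs, abs_of_pos (inv_pos.mpr hvn),
            inv_mul_cancel₀ hvn.ne']
        · rw [real_inner_smul_left, real_inner_comm, hvy, mul_zero]
        · rw [real_inner_smul_left, real_inner_comm, hvw, mul_zero]
        · rw [hp]; simp [hp]
      · have hpn' : (0 : ℝ) < ‖p‖ := norm_pos_iff.mpr hp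
        refine ⟨‖p‖⁻¹ • p, ?_, ?_, ?_, ?_⟩
        · rw [norm_smul, Real.norm_eq_abs, abs_of_pos (inv_pos.mpr hpn'),
            inv_mul_cancel₀ hpn'.ne']
        · rw [real_inner_smul_left, hpy, mul_zero]
        · rw [real_inner_smul_left, hpw, mul_zero]
        · rw [smul_smul, mul_inv_cancel₀ hpn'.ne', one_smul]
    obtain ⟨q, hqn, hqy, hqw, hpq⟩ := hq
    set φ : ℝ → Euc d := fun s => s • W + Real.sqrt (R2 - s ^ 2) • q with hφdef
    have hφcont : Continuous φ := by
      apply Continuous.add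
      · exact continuous_id.smul continuous_const
      · exact (Real.continuous_sqrt.comp (continuous_const.sub (continuous_pow 2))).smul continuous_const
    have hφ0 : φ s0 = u0 := by
      have : Real.sqrt (R2 - s0 ^ 2) = ‖p‖ := by
        rw [← hpn, Real.sqrt_sq (norm_nonneg p)]
      rw [hφdef]
      simp only
      rw [this, ← hpq, hpdef]
      abel
    have hmem : s0 ∈ φ ⁻¹' U := by rw [Set.mem_preimage, hφ0]; exact h0U
    obtain ⟨δ, hδ, hball⟩ := Metric.isOpen_iff.mp (hU.preimage hφcont) s0 hmem
    refine ⟨δ * ‖w‖, by positivity, ?_⟩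
    intro u1 h1y h1n hclose
    set s1 : ℝ := ⟪u1, W⟫ with hs1def
    have h1ν : ⟪u1, ν⟫ = ‖w‖ * s1 := by rw [hkey u1 h1y, hinner]
    have h0ν : ⟪u0, ν⟫ = ‖w‖ * s0 := by rw [hkey u0 h0y, hinner]
    have hs1close : |s1 - s0| < δ := by
      rw [h1ν, h0ν, ← mul_sub, abs_mul, abs_of_pos hnw] at hclose
      calc |s1 - s0| = ‖w‖⁻¹ * (‖w‖ * |s1 - s0|) := by field_simp
        _ < ‖w‖⁻¹ * (δ * ‖w‖) := by
            apply mul_lt_mul_of_pos_left _ (inv_pos.mpr hnw)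
            linarith [hclose]
        _ = δ := by field_simp
    have hs1R : s1 ^ 2 ≤ R2 := by
      have h := abs_real_inner_le_norm u1 W
      rw [hWn, mul_one] at h
      have : |s1| ^ 2 ≤ ‖u1‖ ^ 2 := by
        apply pow_le_pow_left₀ (abs_nonneg _) _ 2
        exact h
      rw [sq_abs, h1n] at this
      exact this
    have hsqrt : Real.sqrt (R2 - s1 ^ 2) ^ 2 = R2 - s1 ^ 2 :=
      Real.sq_sqrt (by linarith)
    have hφ1U : φ s1 ∈ U := hball (by rw [Metric.mem_ball, Real.dist_eq]; exact hs1close)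
    have hWq : ⟪W, q⟫ = 0 := by
      rw [hWdef, real_inner_smul_left, real_inner_comm, hqw, mul_zero]
    have ha : ⟪s1 • W, y⟫ = (0 : ℝ) := by rw [real_inner_smul_left, hWy, mul_zero]
    have hb : ⟪Real.sqrt (R2 - s1 ^ 2) • q, y⟫ = (0 : ℝ) := by
      rw [real_inner_smul_left, hqy, mul_zero]
    have hφy : ⟪φ s1, y⟫ = 0 := by
      show ⟪s1 • W + Real.sqrt (R2 - s1 ^ 2) • q, y⟫ = (0 : ℝ)
      rw [inner_add_left, ha, hb, add_zero]
    refine ⟨φ s1, hφy, ?_, hφ1U, ?_⟩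
    · have e1 : ‖s1 • W‖ ^ 2 = s1 ^ 2 := by
        rw [norm_smul, hWn, mul_one, Real.norm_eq_abs, sq_abs]
      have e2 : ‖Real.sqrt (R2 - s1 ^ 2) • q‖ ^ 2 = R2 - s1 ^ 2 := by
        rw [norm_smul, hqn, mul_one, Real.norm_eq_abs, sq_abs, hsqrt]
      have e3 : ⟪s1 • W, Real.sqrt (R2 - s1 ^ 2) • q⟫ = (0 : ℝ) := by
        rw [real_inner_smul_left, real_inner_smul_right, hWq]
        ring
      have : ‖φ s1‖ ^ 2 = ‖s1 • W‖ ^ 2 + 2 * ⟪s1 • W, Real.sqrt (R2 - s1 ^ 2) • q⟫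
          + ‖Real.sqrt (R2 - s1 ^ 2) • q‖ ^ 2 := norm_add_sq_real _ _
      rw [this, e1, e2, e3]
      ring
    · have hc : ⟪s1 • W, w⟫ = s1 * ‖w‖ := by rw [real_inner_smul_left, hWw]
      have hd' : ⟪Real.sqrt (R2 - s1 ^ 2) • q, w⟫ = (0 : ℝ) := by
        rw [real_inner_smul_left, hqw, mul_zero]
      rw [hkey _ hφy, h1ν]
      show ⟪s1 • W + Real.sqrt (R2 - s1 ^ 2) • q, w⟫ = ‖w‖ * s1
      rw [inner_add_left, hc, hd', add_zero, mul_comm]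


lemma aux_char {d : ℕ} (k0 : ℝ) (hk0 : 0 < k0) (y σ : Euc d) :
    (‖σ‖ = k0 ∧ ‖σ + y‖ = k0) ↔
    (⟪σ + (2⁻¹ : ℝ) • y, y⟫ = 0 ∧ ‖σ + (2⁻¹ : ℝ) • y‖ ^ 2 = k0 ^ 2 - ‖y‖ ^ 2 / 4) := by
  have e1 : ‖σ + y‖ ^ 2 = ‖σ‖ ^ 2 + 2 * ⟪σ, y⟫ + ‖y‖ ^ 2 := norm_add_sq_real σ y
  have e2 : ‖σ + (2⁻¹ : ℝ) • y‖ ^ 2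
      = ‖σ‖ ^ 2 + 2 * ⟪σ, (2⁻¹ : ℝ) • y⟫ + ‖(2⁻¹ : ℝ) • y‖ ^ 2 := norm_add_sq_real _ _
  have e3 : ⟪σ, (2⁻¹ : ℝ) • y⟫ = 2⁻¹ * ⟪σ, y⟫ := real_inner_smul_right σ y 2⁻¹
  have e4 : ‖(2⁻¹ : ℝ) • y‖ ^ 2 = 4⁻¹ * ‖y‖ ^ 2 := by
    rw [norm_smul, Real.norm_eq_abs, abs_of_pos (by norm_num : (0:ℝ) < 2⁻¹)]
    ring
  have e5 : ⟪σ + (2⁻¹ : ℝ) • y, y⟫ = ⟪σ, y⟫ + 2⁻¹ * ‖y‖ ^ 2 := by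
    rw [inner_add_left, real_inner_smul_left, real_inner_self_eq_norm_sq]
  constructor
  · rintro ⟨h1, h2⟩
    have h1' : ‖σ‖ ^ 2 = k0 ^ 2 := by rw [h1]
    have h2' : ‖σ + y‖ ^ 2 = k0 ^ 2 := by rw [h2]
    constructor
    · rw [e5]; nlinarith
    · rw [e2, e3, e4]; nlinarith
  · rintro ⟨h1, h2⟩
    rw [e5] at h1
    rw [e2, e3, e4] at h2
    have hn1 : ‖σ‖ ^ 2 = k0 ^ 2 := by nlinarith
    have hn2 : ‖σ + y‖ ^ 2 = k0 ^ 2 := by nlinarith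
    constructor
    · rw [← Real.sqrt_sq (norm_nonneg σ), hn1, Real.sqrt_sq hk0.le]
    · rw [← Real.sqrt_sq (norm_nonneg (σ + y)), hn2, Real.sqrt_sq hk0.le]

lemma aux_Hr_norm {d : ℕ} (ν : Euc d) (hν : ‖ν‖ = 1) (x : Euc d) : ‖Hr ν x‖ = ‖x‖ := by
  have h : ‖Hr ν x‖ ^ 2 = ‖x‖ ^ 2 := by
    simp only [Hr]
    rw [norm_sub_sq_real, real_inner_smul_right, norm_smul, Real.norm_eq_abs, hν]
    have habs : (|2 * ⟪x, ν⟫| * 1) ^ 2 = (2 * ⟪x, ν⟫) ^ 2 := by rw [mul_one, sq_abs]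
    rw [habs]
    ring
  rw [← Real.sqrt_sq (norm_nonneg (Hr ν x)), h, Real.sqrt_sq (norm_nonneg x)]

end AuxStmt4

set_option maxHeartbeats 1000000 in
/-- `F_y` is a relatively open subset of the closed line segment `L_y`. -/
theorem stmt4 {d : ℕ} (hd : 2 < d) (k0 : ℝ) (hk0 : 0 < k0)
    (ν ω : Euc d) (hν : ‖ν‖ = 1) (hω : ‖ω‖ = 1)
    (e : Euc d) (he : e = eLast d (by omega))
    (y : Euc d)
    (Λy : Set ℝ) (hΛ : Λy = {l | ∃ σ : Euc d, ‖σ‖ = k0 ∧ ‖σ + y‖ = k0 ∧ ⟪σ, ν⟫ = l})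
    (Ly : Set (Euc d)) (hL : Ly = {x | ∃ l ∈ Λy, x = y + (2 * l) • ν}) :
    Fcoup k0 ν ω e y ⊆ Ly ∧
    ∃ V : Set (Euc d), IsOpen V ∧ Fcoup k0 ν ω e y = Ly ∩ V := by
  classical
  have hν2 : ⟪ν, ν⟫ = (1 : ℝ) := by rw [real_inner_self_eq_norm_sq, hν]; norm_num
  set U : Set (Euc d) := {σ : Euc d | 0 < ⟪σ, ω⟫ ∧ 0 < ⟪Hr ν σ, ω⟫ ∧ 0 < ⟪σ + y, e⟫}
    with hUdef
  have hUopen : IsOpen U := by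
    have c1 : Continuous fun σ : Euc d => ⟪σ, ω⟫ := continuous_id.inner continuous_const
    have c2 : Continuous fun σ : Euc d => ⟪Hr ν σ, ω⟫ := by
      simp only [Hr]
      exact (continuous_id.sub
        ((continuous_const.mul (continuous_id.inner continuous_const : Continuous fun σ : Euc d => ⟪σ, ν⟫)).smul
          continuous_const)).inner continuous_const
    have c3 : Continuous fun σ : Euc d => ⟪σ + y, e⟫ :=
      (continuous_id.add continuous_const).inner continuous_const
    have hU' : U = (fun σ : Euc d => ⟪σ, ω⟫) ⁻¹' (Set.Ioi 0) ∩
        ((fun σ : Euc d => ⟪Hr ν σ, ω⟫) ⁻¹' (Set.Ioi 0) ∩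
          (fun σ : Euc d => ⟪σ + y, e⟫) ⁻¹' (Set.Ioi 0)) := by
      ext σ
      simp [hUdef, Set.mem_Ioi, and_assoc]
    rw [hU']
    exact (isOpen_Ioi.preimage c1).inter
      ((isOpen_Ioi.preimage c2).inter (isOpen_Ioi.preimage c3))
  have hmemiff : ∀ σ : Euc d,
      (σ ∈ Sig2 k0 ν ω ∧ σ + y ∈ Shemi k0 e) ↔ (‖σ‖ = k0 ∧ ‖σ + y‖ = k0 ∧ σ ∈ U) := by
    intro σ
    constructor
    · rintro ⟨⟨⟨hn, hi⟩, ⟨hn2, hi2⟩⟩, ⟨hn3, hi3⟩⟩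
      exact ⟨hn, hn3, hi, hi2, hi3⟩
    · rintro ⟨hn, hn3, hi, hi2, hi3⟩
      exact ⟨⟨⟨hn, hi⟩, ⟨(aux_Hr_norm ν hν σ).trans hn, hi2⟩⟩, hn3, hi3⟩
  set T : Set ℝ := {l | ∃ σ : Euc d, (σ ∈ Sig2 k0 ν ω ∧ σ + y ∈ Shemi k0 e) ∧ ⟪σ, ν⟫ = l}
    with hTdef
  have hTsub : T ⊆ Λy := by
    rintro l ⟨σ, ⟨h1, h2⟩, h3⟩
    rw [hΛ]
    obtain ⟨hn, hn2, _⟩ := (hmemiff σ).mp ⟨h1, h2⟩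
    exact ⟨σ, hn, hn2, h3⟩
  have hloc : ∀ l ∈ T, ∃ ε > 0, ∀ l' ∈ Λy, |l' - l| < ε → l' ∈ T := by
    rintro l ⟨σ0, ⟨hσ01, hσ02⟩, hσ0l⟩
    obtain ⟨hn0, hn0', hU0⟩ := (hmemiff σ0).mp ⟨hσ01, hσ02⟩
    have hU'open : IsOpen ((fun u : Euc d => u - (2⁻¹ : ℝ) • y) ⁻¹' U) :=
      hUopen.preimage (continuous_id.sub continuous_const)
    have hu0 := (aux_char k0 hk0 y σ0).mp ⟨hn0, hn0'⟩
    obtain ⟨ε, hε, hcore⟩ := aux_core0 hd ν y (k0 ^ 2 - ‖y‖ ^ 2 / 4) _ hU'open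
      (σ0 + (2⁻¹ : ℝ) • y) (by simpa using hU0) hu0.1 hu0.2
    refine ⟨ε, hε, ?_⟩
    intro l' hl' hclose
    rw [hΛ] at hl'
    obtain ⟨σ1, hσ1n, hσ1n', hσ1l⟩ := hl'
    have hu1 := (aux_char k0 hk0 y σ1).mp ⟨hσ1n, hσ1n'⟩
    have hdiff : |⟪σ1 + (2⁻¹ : ℝ) • y, ν⟫ - ⟪σ0 + (2⁻¹ : ℝ) • y, ν⟫| < ε := by
      have f1 : ⟪σ1 + (2⁻¹ : ℝ) • y, ν⟫ = ⟪σ1, ν⟫ + 2⁻¹ * ⟪y, ν⟫ := by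
        rw [inner_add_left, real_inner_smul_left]
      have f0 : ⟪σ0 + (2⁻¹ : ℝ) • y, ν⟫ = ⟪σ0, ν⟫ + 2⁻¹ * ⟪y, ν⟫ := by
        rw [inner_add_left, real_inner_smul_left]
      have f2 : ⟪σ1, ν⟫ + 2⁻¹ * ⟪y, ν⟫ - (⟪σ0, ν⟫ + 2⁻¹ * ⟪y, ν⟫)
          = ⟪σ1, ν⟫ - ⟪σ0, ν⟫ := by ring
      rw [f1, f0, f2, hσ1l, hσ0l]
      exact hclose
    obtain ⟨u, huy, hun, huU, huν⟩ := hcore (σ1 + (2⁻¹ : ℝ) • y) hu1.1 hu1.2 hdiff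
    set σ : Euc d := u - (2⁻¹ : ℝ) • y with hσdef
    have hσu : σ + (2⁻¹ : ℝ) • y = u := by rw [hσdef]; abel
    have hmem2 := (aux_char k0 hk0 y σ).mpr
      ⟨by rw [hσu]; exact huy, by rw [hσu]; exact hun⟩
    have hσU : σ ∈ U := huU
    have hσν : ⟪σ, ν⟫ = l' := by
      have g1 : ⟪σ, ν⟫ = ⟪u, ν⟫ - 2⁻¹ * ⟪y, ν⟫ := by
        rw [hσdef, inner_sub_left, real_inner_smul_left]
      have g2 : ⟪u, ν⟫ = ⟪σ1, ν⟫ + 2⁻¹ * ⟪y, ν⟫ := by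
        rw [huν, inner_add_left, real_inner_smul_left]
      rw [g1, g2]
      linarith [hσ1l]
    exact ⟨σ, (hmemiff σ).mpr ⟨hmem2.1, hmem2.2, hσU⟩, hσν⟩
  choose ε hεpos hεprop using hloc
  set Wset : Set ℝ := ⋃ (l : ℝ) (h : l ∈ T), Metric.ball l (ε l h) with hWset
  have hWopen : IsOpen Wset :=
    isOpen_iUnion fun l => isOpen_iUnion fun h => Metric.isOpen_ball
  have hTW : T = Λy ∩ Wset := by
    apply Set.Subset.antisymm
    · intro l hl
      exact ⟨hTsub hl, Set.mem_iUnion₂.mpr ⟨l, hl, Metric.mem_ball_self (hεpos l hl)⟩⟩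
    · rintro l ⟨hlΛ, hlW⟩
      obtain ⟨l0, h0, hball⟩ := Set.mem_iUnion₂.mp hlW
      rw [Metric.mem_ball, Real.dist_eq] at hball
      exact hεprop l0 h0 l hlΛ hball
  set V : Set (Euc d) := (fun x : Euc d => (2⁻¹ : ℝ) * ⟪x - y, ν⟫) ⁻¹' Wset with hVdef
  have hVopen : IsOpen V :=
    hWopen.preimage (continuous_const.mul
      ((continuous_id.sub continuous_const).inner continuous_const))
  have hcomp : ∀ l : ℝ, (2⁻¹ : ℝ) * ⟪(y + (2 * l) • ν) - y, ν⟫ = l := by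
    intro l
    have h1 : (y + (2 * l) • ν) - y = (2 * l) • ν := by abel
    rw [h1, real_inner_smul_left, hν2]
    ring
  have hkeyF : ∀ z ∈ Fcoup k0 ν ω e y, ∃ l ∈ T, z = y + (2 * l) • ν := by
    rintro z ⟨η, hη, σ, hσ, hyz, hz⟩
    have hησ : η = y + σ := by rw [hyz]; abel
    refine ⟨⟪σ, ν⟫, ⟨σ, ⟨hσ, ?_⟩, rfl⟩, ?_⟩
    · have h2 : σ + y = η := by rw [hyz]; abel
      rw [h2]; exact hη
    · rw [hz, hησ]
      simp only [Hr]
      abel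
  constructor
  · intro z hz
    obtain ⟨l, hlT, hzl⟩ := hkeyF z hz
    rw [hL]
    exact ⟨l, hTsub hlT, hzl⟩
  · refine ⟨V, hVopen, ?_⟩
    apply Set.Subset.antisymm
    · intro z hz
      obtain ⟨l, hlT, hzl⟩ := hkeyF z hz
      refine ⟨by rw [hL]; exact ⟨l, hTsub hlT, hzl⟩, ?_⟩
      show (2⁻¹ : ℝ) * ⟪z - y, ν⟫ ∈ Wset
      rw [hzl, hcomp l]
      have := hTW ▸ hlT
      exact this.2
    · rintro x ⟨hxL, hxV⟩
      rw [hL] at hxL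
      obtain ⟨l, hlΛ, hxl⟩ := hxL
      have hlW : l ∈ Wset := by
        have hxV' : (2⁻¹ : ℝ) * ⟪x - y, ν⟫ ∈ Wset := hxV
        rw [hxl, hcomp l] at hxV'
        exact hxV'
      have hlT : l ∈ T := by rw [hTW]; exact ⟨hlΛ, hlW⟩
      obtain ⟨σ, ⟨hσ2, hσ3⟩, hσl⟩ := hlT
      refine ⟨σ + y, hσ3, σ, hσ2, by abel, ?_⟩
      rw [hxl, ← hσl]
      simp only [Hr]
      abel
end

section
/- Let d > 3, let y ∈ Y2, and suppose g : ℝ^d → ℂ solves the homogeneous system. If there exists λ ∈ ℝ such that b is not constant on C_{y,λ} (i.e., there exist σ, σ̂ ∈ C_{y,λ} with b(σ) ≠ b(σ̂)), then g(y) = 0. -/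
open Set MeasureTheory
open scoped RealInnerProductSpace

/-- if `b` is not constant on some `C_{y,λ}`, then `g y = 0` (dimension `> 3`). -/
theorem stmt6 {d : ℕ} (hd : 3 < d) (k0 : ℝ) (hk0 : 0 < k0)
    (ν ω : Euc d) (hν : ‖ν‖ = 1) (hω : ‖ω‖ = 1)
    (e : Euc d) (he : e = eLast d (by omega))
    (χ : ℝ) (hχ : χ ∈ Set.Ioo (0 : ℝ) 1)
    (b : Euc d → ℂ) (hb : BHyp k0 χ ν ω b)
    (g : Euc d → ℂ) (hg : SolvesHom k0 ν ω e b g)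
    (y : Euc d) (hy : y ∈ Y2set k0 ν ω e)
    (hlam : ∃ lam : ℝ, ∃ σ1 ∈ Cset k0 ν ω e y lam, ∃ σ2 ∈ Cset k0 ν ω e y lam,
      b σ1 ≠ b σ2) :
    g y = 0 := by
  obtain ⟨lam, σ1, ⟨hσ1, hη1, hl1⟩, σ2, ⟨hσ2, hη2, hl2⟩, hne⟩ := hlam
  have key : ∀ σ : Euc d, σ ∈ Sig2 k0 ν ω → σ + y ∈ Shemi k0 e → ⟪σ, ν⟫ = lam →
      b σ * g y + g (y + (2 * lam) • ν) = 0 := by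
    intro σ hσ hη hl
    have h := (hg (σ + y) hη).2 σ hσ
    have h1 : σ + y - σ = y := by abel
    have h2 : σ + y - Hr ν σ = y + (2 * lam) • ν := by
      simp only [Hr, hl]; abel
    rwa [h1, h2] at h
  have e1 := key σ1 hσ1 hη1 hl1
  have e2 := key σ2 hσ2 hη2 hl2
  have : (b σ1 - b σ2) * g y = 0 := by ring_nf; linear_combination e1 - e2
  rcases mul_eq_zero.1 this with h | h
  · exact absurd (sub_eq_zero.1 h) hne
  · exact h
end

section
/- Let d = 3 and let η ∈ S_{e_3} and σ ∈ Σ2 be such that the vectors η, σ, ν are linearly independent; set y = η − σ and z = η − H_ν σ. Then there exist an open neighborhood U ⊆ ℝ³ of the origin, an open interval J ⊆ ℝ containing 0, and smooth (C^∞) maps η̂ : U × J × J → ℝ³ and σ̂ : U × J × J → ℝ³ with η̂(0,0,0) = η, σ̂(0,0,0) = σ, such that for all (w, δ, ε) ∈ U × J × J: η̂(w,δ,ε) ∈ S_{e_3}, σ̂(w,δ,ε) ∈ Σ2, y + w + δν = η̂(w,δ,ε) − σ̂(w,δ,ε), and z + w + εν = η̂(w,δ,ε) − H_ν σ̂(w,δ,ε).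 -/
open Set MeasureTheory
open scoped RealInnerProductSpace

noncomputable section

namespace S10

lemma inner_cross_left (a b : Euc 3) : ⟪a, cross3 a b⟫ = 0 := by
  simp [cross3, PiLp.inner_apply, Fin.sum_univ_three, EuclideanSpace.equiv]; ring

lemma inner_cross_right (a b : Euc 3) : ⟪b, cross3 a b⟫ = 0 := by
  simp [cross3, PiLp.inner_apply, Fin.sum_univ_three, EuclideanSpace.equiv]; ring

lemma inner_cross_self (a b : Euc 3) :
    ⟪cross3 a b, cross3 a b⟫ = ⟪a,a⟫ * ⟪b,b⟫ - ⟪a,b⟫ ^ 2 := by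
  simp [cross3, PiLp.inner_apply, Fin.sum_univ_three, EuclideanSpace.equiv, EuclideanSpace.norm_sq_eq]; ring

lemma vec_decomp (u v x : Euc 3) :
    (⟪u,u⟫ * ⟪v,v⟫ - ⟪u,v⟫ ^ 2) • x =
      (⟪x,u⟫ * ⟪v,v⟫ - ⟪x,v⟫ * ⟪v,u⟫) • u + (⟪x,v⟫ * ⟪u,u⟫ - ⟪x,u⟫ * ⟪u,v⟫) • v
        + ⟪x, cross3 u v⟫ • cross3 u v := by
  ext i
  fin_cases i <;>
    simp [cross3, PiLp.inner_apply, Fin.sum_univ_three, EuclideanSpace.equiv, EuclideanSpace.norm_sq_eq] <;> ring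

def crossL (a : Euc 3) : Euc 3 →ₗ[ℝ] Euc 3 where
  toFun := cross3 a
  map_add' x y := by
    ext i; fin_cases i <;> simp [cross3, EuclideanSpace.equiv] <;> ring
  map_smul' c x := by
    ext i; fin_cases i <;> simp [cross3, EuclideanSpace.equiv] <;> ring

lemma contDiff_cross3 (a : Euc 3) {n : WithTop ℕ∞} : ContDiff ℝ n (cross3 a) :=
  (crossL a).toContinuousLinearMap.contDiff

def Gm (ν y : Euc 3) (p : Euc 3 × ℝ × ℝ) : Euc 3 := y + p.1 + p.2.1 • ν
def lam (ν σ : Euc 3) (p : Euc 3 × ℝ × ℝ) : ℝ := ⟪σ, ν⟫ + (p.2.2 - p.2.1) / 2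
def Cf (ν y : Euc 3) (p : Euc 3 × ℝ × ℝ) : ℝ := -⟪Gm ν y p, Gm ν y p⟫ / 2
def Del (ν y : Euc 3) (p : Euc 3 × ℝ × ℝ) : ℝ :=
  ⟪ν, ν⟫ * ⟪Gm ν y p, Gm ν y p⟫ - ⟪ν, Gm ν y p⟫ ^ 2
def Af (ν σ y : Euc 3) (p : Euc 3 × ℝ × ℝ) : ℝ :=
  (lam ν σ p * ⟪Gm ν y p, Gm ν y p⟫ - Cf ν y p * ⟪Gm ν y p, ν⟫) / Del ν y p
def Bf (ν σ y : Euc 3) (p : Euc 3 × ℝ × ℝ) : ℝ :=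
  (Cf ν y p * ⟪ν, ν⟫ - lam ν σ p * ⟪ν, Gm ν y p⟫) / Del ν y p
def Nf (ν y : Euc 3) (p : Euc 3 × ℝ × ℝ) : Euc 3 := cross3 ν (Gm ν y p)
def S0 (ν σ y : Euc 3) (p : Euc 3 × ℝ × ℝ) : Euc 3 :=
  Af ν σ y p • ν + Bf ν σ y p • Gm ν y p
def Rf (k0 : ℝ) (ν σ y : Euc 3) (p : Euc 3 × ℝ × ℝ) : ℝ :=
  k0 ^ 2 - ⟪S0 ν σ y p, S0 ν σ y p⟫
def Tf (k0 : ℝ) (ν σ y : Euc 3) (p : Euc 3 × ℝ × ℝ) : ℝ :=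
  (⟪σ, Nf ν y 0⟫ / Del ν y 0) *
    Real.sqrt (Rf k0 ν σ y p * Del ν y 0 / (Del ν y p * Rf k0 ν σ y 0))
def sh (k0 : ℝ) (ν σ y : Euc 3) (p : Euc 3 × ℝ × ℝ) : Euc 3 :=
  S0 ν σ y p + Tf k0 ν σ y p • Nf ν y p
def eh (k0 : ℝ) (ν σ y : Euc 3) (p : Euc 3 × ℝ × ℝ) : Euc 3 :=
  sh k0 ν σ y p + Gm ν y p

lemma S0_nu (ν σ y : Euc 3) (p : Euc 3 × ℝ × ℝ) (hΔ : Del ν y p ≠ 0) :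
    ⟪S0 ν σ y p, ν⟫ = lam ν σ p := by
  simp only [S0, inner_add_left, real_inner_smul_left, Af, Bf]
  rw [div_mul_eq_mul_div, div_mul_eq_mul_div, ← add_div, div_eq_iff hΔ, Del]
  simp only [real_inner_comm (Gm ν y p) ν]
  ring

lemma S0_g (ν σ y : Euc 3) (p : Euc 3 × ℝ × ℝ) (hΔ : Del ν y p ≠ 0) :
    ⟪S0 ν σ y p, Gm ν y p⟫ = Cf ν y p := by
  simp only [S0, inner_add_left, real_inner_smul_left, Af, Bf]
  rw [div_mul_eq_mul_div, div_mul_eq_mul_div, ← add_div, div_eq_iff hΔ, Del]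
  simp only [real_inner_comm (Gm ν y p) ν]
  ring

lemma S0_N (ν σ y : Euc 3) (p : Euc 3 × ℝ × ℝ) : ⟪S0 ν σ y p, Nf ν y p⟫ = 0 := by
  simp only [S0, Nf, inner_add_left, real_inner_smul_left, inner_cross_left,
    inner_cross_right, mul_zero, add_zero]

lemma contDiff_Gm (ν y : Euc 3) {n : WithTop ℕ∞} : ContDiff ℝ n (Gm ν y) :=
  (contDiff_const.add contDiff_fst).add
    ((contDiff_fst.comp contDiff_snd).smul contDiff_const)

end S10

end

set_option maxHeartbeats 1000000 in
/-- existence of the smooth local parametrizations `η̂`, `σ̂` in dimension 3. -/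
theorem stmt10 (k0 : ℝ) (hk0 : 0 < k0)
    (ν ω : Euc 3) (hν : ‖ν‖ = 1) (hω : ‖ω‖ = 1)
    (η σ : Euc 3) (hη : η ∈ Shemi k0 e3) (hσ : σ ∈ Sig2 k0 ν ω)
    (hind : LinearIndependent ℝ ![η, σ, ν])
    (y z : Euc 3) (hy : y = η - σ) (hz : z = η - Hr ν σ) :
    ∃ U : Set (Euc 3), ∃ a c : ℝ, IsOpen U ∧ (0 : Euc 3) ∈ U ∧ a < 0 ∧ 0 < c ∧
      ∃ ηhat σhat : Euc 3 × ℝ × ℝ → Euc 3,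
        ContDiffOn ℝ (⊤ : ℕ∞) ηhat (U ×ˢ Set.Ioo a c ×ˢ Set.Ioo a c) ∧
        ContDiffOn ℝ (⊤ : ℕ∞) σhat (U ×ˢ Set.Ioo a c ×ˢ Set.Ioo a c) ∧
        ηhat (0, 0, 0) = η ∧ σhat (0, 0, 0) = σ ∧
        ∀ w ∈ U, ∀ δ ∈ Set.Ioo a c, ∀ ε ∈ Set.Ioo a c,
          ηhat (w, δ, ε) ∈ Shemi k0 e3 ∧
          σhat (w, δ, ε) ∈ Sig2 k0 ν ω ∧
          y + w + δ • ν = ηhat (w, δ, ε) - σhat (w, δ, ε) ∧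
          z + w + ε • ν = ηhat (w, δ, ε) - Hr ν (σhat (w, δ, ε)) := by
  classical
  obtain ⟨hηn, hηe⟩ := hη
  obtain ⟨⟨hσn, hσω⟩, hHσn, hHσω⟩ := hσ
  have hνν : ⟪ν, ν⟫ = 1 := by rw [real_inner_self_eq_norm_sq, hν]; norm_num
  have hσσ : ⟪σ, σ⟫ = k0 ^ 2 := by rw [real_inner_self_eq_norm_sq, hσn]
  have hηη : ⟪η, η⟫ = k0 ^ 2 := by rw [real_inner_self_eq_norm_sq, hηn]
  have hli : ∀ a b c : ℝ, a • η + b • σ + c • ν = 0 → a = 0 ∧ b = 0 ∧ c = 0 := by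
    intro a b c h
    have h2 := Fintype.linearIndependent_iff.mp hind ![a, b, c]
      (by simpa [Fin.sum_univ_three] using h)
    exact ⟨h2 0, h2 1, h2 2⟩
  have hG0 : S10.Gm ν y 0 = η - σ := by simp [S10.Gm, hy]
  have hg0 : η - σ ≠ 0 := by
    intro h
    have h' : (1:ℝ) • η + (-1:ℝ) • σ + (0:ℝ) • ν = 0 := by
      simp only [one_smul, neg_one_smul, zero_smul, add_zero, ← sub_eq_add_neg, h]
    exact one_ne_zero (hli 1 (-1) 0 h').1
  have hind2 : ∀ a b : ℝ, a • ν + b • (η - σ) = 0 → a = 0 ∧ b = 0 := by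
    intro a b h
    have h' : b • η + (-b) • σ + a • ν = 0 := by rw [← h]; module
    obtain ⟨h1, h2, h3⟩ := hli _ _ _ h'
    exact ⟨h3, h1⟩
  have hΔ0pos : 0 < S10.Del ν y 0 := by
    have hlt1 : ⟪ν, η - σ⟫ < ‖ν‖ * ‖η - σ‖ := by
      rw [inner_lt_norm_mul_iff_real]
      intro hcon
      have h' : ‖η - σ‖ • ν + (-‖ν‖) • (η - σ) = 0 := by
        rw [neg_smul, ← hcon]; abel
      have h1 := (hind2 _ _ h').1
      exact hg0 (norm_eq_zero.mp h1)
    have hlt2 : ⟪ν, σ - η⟫ < ‖ν‖ * ‖σ - η‖ := by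
      rw [inner_lt_norm_mul_iff_real]
      intro hcon
      have h' : ‖σ - η‖ • ν + ‖ν‖ • (η - σ) = 0 := by
        rw [show (η - σ) = -(σ - η) by abel, smul_neg, ← hcon]; abel
      have h1 := (hind2 _ _ h').1
      apply hg0
      rw [show (η - σ) = -(σ - η) by abel, neg_eq_zero]
      exact norm_eq_zero.mp h1
    rw [hν, one_mul] at hlt1 hlt2
    rw [show ⟪ν, σ - η⟫ = -⟪ν, η - σ⟫ by rw [← inner_neg_right]; congr 1; abel,
      show ‖σ - η‖ = ‖η - σ‖ by rw [← norm_neg]; congr 1; abel] at hlt2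
    rw [S10.Del, hG0, hνν, real_inner_self_eq_norm_sq]
    nlinarith [hlt1, hlt2]
  have hΔ0 : S10.Del ν y 0 ≠ 0 := ne_of_gt hΔ0pos
  have hC0 : S10.Cf ν y 0 = ⟪σ, S10.Gm ν y 0⟫ := by
    rw [S10.Cf, hG0]
    simp only [inner_sub_left, inner_sub_right, real_inner_comm η σ]
    rw [hσσ, hηη]; ring
  have hlam0 : S10.lam ν σ 0 = ⟪σ, ν⟫ := by simp [S10.lam]
  set t0 : ℝ := ⟪σ, S10.Nf ν y 0⟫ / S10.Del ν y 0 with ht0def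
  have hσdec : σ = S10.S0 ν σ y 0 + t0 • S10.Nf ν y 0 := by
    apply smul_right_injective (Euc 3) hΔ0
    show S10.Del ν y 0 • σ = S10.Del ν y 0 • (S10.S0 ν σ y 0 + t0 • S10.Nf ν y 0)
    have hvd := S10.vec_decomp ν (S10.Gm ν y 0) σ
    rw [← hlam0, ← hC0] at hvd
    rw [smul_add, smul_smul, ht0def, mul_div_cancel₀ _ hΔ0]
    rw [S10.S0, smul_add, smul_smul, smul_smul, S10.Af, S10.Bf,
      mul_div_cancel₀ _ hΔ0, mul_div_cancel₀ _ hΔ0]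
    simp only [S10.Del, S10.Nf]
    exact hvd
  have hNN : ∀ p, ⟪S10.Nf ν y p, S10.Nf ν y p⟫ = S10.Del ν y p := fun p => by
    rw [S10.Nf, S10.inner_cross_self]; rfl
  have hR0 : S10.Rf k0 ν σ y 0 = t0 ^ 2 * S10.Del ν y 0 := by
    have hexp : ⟪σ, σ⟫ =
        ⟪S10.S0 ν σ y 0, S10.S0 ν σ y 0⟫ + t0 ^ 2 * S10.Del ν y 0 := by
      conv_lhs => rw [hσdec]
      simp only [inner_add_left, inner_add_right, real_inner_smul_left,
        real_inner_smul_right, S10.S0_N, hNN]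
      have hc := S10.S0_N ν σ y 0
      rw [real_inner_comm] at hc
      rw [hc]; ring
    rw [S10.Rf, ← hσσ, hexp]; ring
  have ht0 : t0 ≠ 0 := by
    intro h0
    rw [h0, zero_smul, add_zero, S10.S0, hG0] at hσdec
    have h' : S10.Bf ν σ y 0 • η + (-1 - S10.Bf ν σ y 0) • σ + S10.Af ν σ y 0 • ν = 0 := by
      rw [show S10.Bf ν σ y 0 • η + (-1 - S10.Bf ν σ y 0) • σ + S10.Af ν σ y 0 • ν
        = (S10.Af ν σ y 0 • ν + S10.Bf ν σ y 0 • (η - σ)) - σ by module, ← hσdec]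
      simp
    obtain ⟨h1, h2, _⟩ := hli _ _ _ h'
    rw [h1] at h2; norm_num at h2
  have hR0pos : 0 < S10.Rf k0 ν σ y 0 := by
    rw [hR0]
    exact mul_pos (sq_pos_of_ne_zero ht0) hΔ0pos
  have hT0 : S10.Tf k0 ν σ y 0 = t0 := by
    rw [S10.Tf, show S10.Rf k0 ν σ y 0 * S10.Del ν y 0 /
        (S10.Del ν y 0 * S10.Rf k0 ν σ y 0) = 1
      by rw [mul_comm]; exact div_self (ne_of_gt (mul_pos hΔ0pos hR0pos))]
    rw [Real.sqrt_one, mul_one]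
  have hsh0 : S10.sh k0 ν σ y 0 = σ := by rw [S10.sh, hT0, ← hσdec]
  have heh0 : S10.eh k0 ν σ y 0 = η := by rw [S10.eh, hsh0, hG0]; abel
  have hzy : z = y + (2 * ⟪σ, ν⟫) • ν := by rw [hz, hy, Hr]; module
  -- smoothness
  have hG := S10.contDiff_Gm (n := ((⊤ : ℕ∞) : WithTop ℕ∞)) ν y
  have hgg : ContDiff ℝ (⊤ : ℕ∞) fun p => ⟪S10.Gm ν y p, S10.Gm ν y p⟫ := hG.inner ℝ hG
  have hνg : ContDiff ℝ (⊤ : ℕ∞) fun p => ⟪ν, S10.Gm ν y p⟫ := contDiff_const.inner ℝ hG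
  have hgν : ContDiff ℝ (⊤ : ℕ∞) fun p => ⟪S10.Gm ν y p, ν⟫ := hG.inner ℝ contDiff_const
  have hlam_cd : ContDiff ℝ (⊤ : ℕ∞) (S10.lam ν σ) := by
    unfold S10.lam
    exact contDiff_const.add (((contDiff_snd.comp contDiff_snd).sub
      (contDiff_fst.comp contDiff_snd)).div_const 2)
  have hC_cd : ContDiff ℝ (⊤ : ℕ∞) (S10.Cf ν y) := by
    unfold S10.Cf; exact hgg.neg.div_const 2
  have hDel_cd : ContDiff ℝ (⊤ : ℕ∞) (S10.Del ν y) := by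
    unfold S10.Del; exact (contDiff_const.mul hgg).sub (hνg.pow 2)
  have hN_cd : ContDiff ℝ (⊤ : ℕ∞) (S10.Nf ν y) := by
    unfold S10.Nf; exact (S10.contDiff_cross3 ν).comp hG
  set D : Set (Euc 3 × ℝ × ℝ) := {p | 0 < S10.Del ν y p} with hD
  have hDopen : IsOpen D := isOpen_lt continuous_const hDel_cd.continuous
  have hDne : ∀ p ∈ D, S10.Del ν y p ≠ 0 := fun p hp => ne_of_gt hp
  have hA_cd : ContDiffOn ℝ (⊤ : ℕ∞) (S10.Af ν σ y) D := by
    unfold S10.Af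
    exact ((hlam_cd.mul hgg).sub (hC_cd.mul hgν)).contDiffOn.div hDel_cd.contDiffOn hDne
  have hB_cd : ContDiffOn ℝ (⊤ : ℕ∞) (S10.Bf ν σ y) D := by
    unfold S10.Bf
    exact ((hC_cd.mul contDiff_const).sub (hlam_cd.mul hνg)).contDiffOn.div
      hDel_cd.contDiffOn hDne
  have hS0_cd : ContDiffOn ℝ (⊤ : ℕ∞) (S10.S0 ν σ y) D := by
    unfold S10.S0
    exact (hA_cd.smul contDiffOn_const).add (hB_cd.smul hG.contDiffOn)
  have hR_cd : ContDiffOn ℝ (⊤ : ℕ∞) (S10.Rf k0 ν σ y) D := by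
    unfold S10.Rf; exact contDiffOn_const.sub (hS0_cd.inner ℝ hS0_cd)
  set W : Set (Euc 3 × ℝ × ℝ) :=
    {p | 0 < S10.Del ν y p ∧ 0 < S10.Rf k0 ν σ y p} with hWdef
  have hWD : W ⊆ D := fun p hp => hp.1
  have hWopen : IsOpen W := by
    have he : W = D ∩ (S10.Rf k0 ν σ y) ⁻¹' Set.Ioi 0 := rfl
    rw [he]
    exact hR_cd.continuousOn.isOpen_inter_preimage hDopen isOpen_Ioi
  have hT_cd : ContDiffOn ℝ (⊤ : ℕ∞) (S10.Tf k0 ν σ y) W := by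
    intro p hp
    have hDnhds : D ∈ nhds p := hDopen.mem_nhds (hWD hp)
    have harg : ContDiffAt ℝ (⊤ : ℕ∞) (fun q => S10.Rf k0 ν σ y q * S10.Del ν y 0 /
        (S10.Del ν y q * S10.Rf k0 ν σ y 0)) p := by
      apply ContDiffAt.div
      · exact (hR_cd.contDiffAt hDnhds).mul contDiffAt_const
      · exact hDel_cd.contDiffAt.mul contDiffAt_const
      · exact ne_of_gt (mul_pos hp.1 hR0pos)
    have hpos : 0 < S10.Rf k0 ν σ y p * S10.Del ν y 0 /
        (S10.Del ν y p * S10.Rf k0 ν σ y 0) :=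
      div_pos (mul_pos hp.2 hΔ0pos) (mul_pos hp.1 hR0pos)
    have hct : ContDiffAt ℝ (⊤ : ℕ∞) (S10.Tf k0 ν σ y) p := by
      unfold S10.Tf
      exact contDiffAt_const.mul ((Real.contDiffAt_sqrt (ne_of_gt hpos)).comp p harg)
    exact hct.contDiffWithinAt
  have hsh_cd : ContDiffOn ℝ (⊤ : ℕ∞) (S10.sh k0 ν σ y) W := by
    unfold S10.sh
    exact (hS0_cd.mono hWD).add (hT_cd.smul hN_cd.contDiffOn)
  have heh_cd : ContDiffOn ℝ (⊤ : ℕ∞) (S10.eh k0 ν σ y) W := by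
    unfold S10.eh; exact hsh_cd.add hG.contDiffOn
  -- pointwise algebraic facts on W
  have hT2 : ∀ p ∈ W, S10.Tf k0 ν σ y p ^ 2 * S10.Del ν y p = S10.Rf k0 ν σ y p := by
    intro p hp
    have hpos : 0 ≤ S10.Rf k0 ν σ y p * S10.Del ν y 0 /
        (S10.Del ν y p * S10.Rf k0 ν σ y 0) :=
      le_of_lt (div_pos (mul_pos hp.2 hΔ0pos) (mul_pos hp.1 hR0pos))
    rw [S10.Tf, mul_pow, Real.sq_sqrt hpos, ← ht0def]
    have ht0sq : t0 ^ 2 * S10.Del ν y 0 = S10.Rf k0 ν σ y 0 := hR0.symm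
    have hΔp : S10.Del ν y p ≠ 0 := ne_of_gt hp.1
    have hR0ne : S10.Rf k0 ν σ y 0 ≠ 0 := ne_of_gt hR0pos
    rw [show t0 ^ 2 * (S10.Rf k0 ν σ y p * S10.Del ν y 0 / (S10.Del ν y p * S10.Rf k0 ν σ y 0)) *
        S10.Del ν y p = (t0 ^ 2 * S10.Del ν y 0) * S10.Rf k0 ν σ y p * S10.Del ν y p /
        (S10.Del ν y p * S10.Rf k0 ν σ y 0) by ring, ht0sq, div_eq_iff (mul_ne_zero hΔp hR0ne)]
    ring
  have hshsh : ∀ p ∈ W, ⟪S10.sh k0 ν σ y p, S10.sh k0 ν σ y p⟫ = k0 ^ 2 := by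
    intro p hp
    have hc := S10.S0_N ν σ y p
    have hc' := hc
    rw [real_inner_comm] at hc'
    rw [S10.sh]
    simp only [inner_add_left, inner_add_right, real_inner_smul_left,
      real_inner_smul_right, hc, hc', hNN]
    have hRdef : ⟪S10.S0 ν σ y p, S10.S0 ν σ y p⟫ = k0 ^ 2 - S10.Rf k0 ν σ y p := by
      rw [S10.Rf]; ring
    rw [hRdef]
    linear_combination hT2 p hp
  have hshg : ∀ p ∈ W, ⟪S10.sh k0 ν σ y p, S10.Gm ν y p⟫ = S10.Cf ν y p := by
    intro p hp
    have hc : ⟪S10.Nf ν y p, S10.Gm ν y p⟫ = 0 := by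
      rw [S10.Nf, real_inner_comm, S10.inner_cross_right]
    rw [S10.sh, inner_add_left, real_inner_smul_left, S10.S0_g ν σ y p (ne_of_gt hp.1),
      hc, mul_zero, add_zero]
  have hehh : ∀ p ∈ W, ⟪S10.eh k0 ν σ y p, S10.eh k0 ν σ y p⟫ = k0 ^ 2 := by
    intro p hp
    have h1 := hshsh p hp
    have h2 := hshg p hp
    rw [S10.Cf] at h2
    rw [S10.eh]
    simp only [inner_add_left, inner_add_right]
    linear_combination h1 + 2 * h2 - real_inner_comm (S10.Gm ν y p) (S10.sh k0 ν σ y p)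
  have hshν : ∀ p ∈ W, ⟪S10.sh k0 ν σ y p, ν⟫ = S10.lam ν σ p := by
    intro p hp
    have hc : ⟪S10.Nf ν y p, ν⟫ = 0 := by
      rw [S10.Nf, real_inner_comm, S10.inner_cross_left]
    rw [S10.sh, inner_add_left, real_inner_smul_left, S10.S0_nu ν σ y p (ne_of_gt hp.1),
      hc, mul_zero, add_zero]
  have hHr_inner : ∀ x : Euc 3, ⟪Hr ν x, Hr ν x⟫ = ⟪x, x⟫ := by
    intro x
    rw [Hr]
    simp only [inner_sub_left, inner_sub_right, real_inner_smul_left,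
      real_inner_smul_right, hνν, real_inner_comm x ν]
    ring
  have norm_of : ∀ x : Euc 3, ⟪x, x⟫ = k0 ^ 2 → ‖x‖ = k0 := by
    intro x hx
    rw [real_inner_self_eq_norm_sq] at hx
    calc ‖x‖ = Real.sqrt (‖x‖ ^ 2) := (Real.sqrt_sq (norm_nonneg x)).symm
    _ = Real.sqrt (k0 ^ 2) := by rw [hx]
    _ = k0 := Real.sqrt_sq hk0.le
  -- the good open set
  set V : Set (Euc 3 × ℝ × ℝ) := {p | p ∈ W ∧ 0 < ⟪S10.eh k0 ν σ y p, e3⟫ ∧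
    0 < ⟪S10.sh k0 ν σ y p, ω⟫ ∧ 0 < ⟪Hr ν (S10.sh k0 ν σ y p), ω⟫} with hVdef
  have hVW : V ⊆ W := fun p hp => hp.1
  have hVopen : IsOpen V := by
    have hHc : ContinuousOn (fun p => Hr ν (S10.sh k0 ν σ y p)) W := by
      apply ContinuousOn.sub hsh_cd.continuousOn
      exact (ContinuousOn.mul continuousOn_const
        ((hsh_cd.continuousOn.inner continuousOn_const)) :
          ContinuousOn (fun p => 2 * ⟪S10.sh k0 ν σ y p, ν⟫) W).smul continuousOn_const
    have hFc : ContinuousOn (fun p => (⟪S10.eh k0 ν σ y p, e3⟫,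
        ⟪S10.sh k0 ν σ y p, ω⟫, ⟪Hr ν (S10.sh k0 ν σ y p), ω⟫)) W :=
      (heh_cd.continuousOn.inner continuousOn_const).prodMk
        ((hsh_cd.continuousOn.inner continuousOn_const).prodMk
          (hHc.inner continuousOn_const))
    have he : V = W ∩ (fun p => (⟪S10.eh k0 ν σ y p, e3⟫,
        ⟪S10.sh k0 ν σ y p, ω⟫, ⟪Hr ν (S10.sh k0 ν σ y p), ω⟫)) ⁻¹'
        (Set.Ioi 0 ×ˢ Set.Ioi 0 ×ˢ Set.Ioi 0) := by
      ext p
      simp only [hVdef, Set.mem_setOf_eq, Set.mem_inter_iff, Set.mem_preimage,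
        Set.mem_prod, Set.mem_Ioi]
    rw [he]
    exact hFc.isOpen_inter_preimage hWopen (isOpen_Ioi.prod (isOpen_Ioi.prod isOpen_Ioi))
  have h0W : (0 : Euc 3 × ℝ × ℝ) ∈ W := ⟨hΔ0pos, hR0pos⟩
  have h0V : (0 : Euc 3 × ℝ × ℝ) ∈ V := by
    refine ⟨h0W, ?_, ?_, ?_⟩
    · rw [heh0]; exact hηe
    · rw [hsh0]; exact hσω
    · rw [hsh0]; exact hHσω
  obtain ⟨r, hr, hball⟩ := Metric.isOpen_iff.mp hVopen 0 h0V
  have hIoo : Set.Ioo (-r) r = Metric.ball (0 : ℝ) r := by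
    rw [Real.ball_eq_Ioo, zero_sub, zero_add]
  have hprod : Metric.ball (0 : Euc 3) r ×ˢ Set.Ioo (-r) r ×ˢ Set.Ioo (-r) r ⊆ V := by
    intro p hp
    apply hball
    rw [hIoo, ball_prod_same, ball_prod_same] at hp
    exact hp
  refine ⟨Metric.ball 0 r, -r, r, Metric.isOpen_ball, Metric.mem_ball_self hr,
    by linarith, hr, S10.eh k0 ν σ y, S10.sh k0 ν σ y,
    heh_cd.mono (hprod.trans hVW), hsh_cd.mono (hprod.trans hVW), heh0, hsh0, ?_⟩
  intro w hw δ hδ ε hε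
  have hpV : (w, δ, ε) ∈ V := hprod ⟨hw, hδ, hε⟩
  have hpW : (w, δ, ε) ∈ W := hVW hpV
  refine ⟨⟨norm_of _ (hehh _ hpW), hpV.2.1⟩,
    ⟨⟨norm_of _ (hshsh _ hpW), hpV.2.2.1⟩,
      norm_of _ (by rw [hHr_inner]; exact hshsh _ hpW), hpV.2.2.2⟩, ?_, ?_⟩
  · rw [S10.eh, add_sub_cancel_left]; rfl
  · have hsν := hshν _ hpW
    rw [Hr, S10.eh, hsν, hzy]
    simp only [S10.lam, S10.Gm]
    module
end

section
/- Let d = 2. Then (Y1 ∩ Y2) \ {0} = {η − σ : η ∈ (−Σ1) ∩ S_{e_2}, σ ∈ Σ2 ∩ S_{−e_2}}, where −Σ1 = {−σ : σ ∈ Σ1}. -/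
open Set MeasureTheory
open scoped RealInnerProductSpace

lemma inner_coords (a b : Euc 2) : ⟪a, b⟫ = a 0 * b 0 + a 1 * b 1 := by
  simp [PiLp.inner_apply, Fin.sum_univ_two]; ring

lemma two_circle {k0 : ℝ} {y σ1 σ2 : Euc 2} (hy : y ≠ 0)
    (h1 : ‖σ1‖ = k0) (h2 : ‖σ2‖ = k0) (h1' : ‖σ1 + y‖ = k0) (h2' : ‖σ2 + y‖ = k0)
    (hne : σ1 ≠ σ2) : σ2 = -σ1 - y := by
  have hyy : ⟪y, y⟫ = ‖y‖ ^ 2 := real_inner_self_eq_norm_sq y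
  have hyn : ‖y‖ ^ 2 = y 0 ^ 2 + y 1 ^ 2 := by rw [← hyy, inner_coords]; ring
  have hypos : 0 < y 0 ^ 2 + y 1 ^ 2 := by
    have := pow_pos (norm_pos_iff.mpr hy) 2
    rwa [hyn] at this
  have e1 : ‖σ1 + y‖ ^ 2 = ‖σ1‖ ^ 2 + 2 * ⟪σ1, y⟫ + ‖y‖ ^ 2 := norm_add_sq_real σ1 y
  have e2 : ‖σ2 + y‖ ^ 2 = ‖σ2‖ ^ 2 + 2 * ⟪σ2, y⟫ + ‖y‖ ^ 2 := norm_add_sq_real σ2 y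
  rw [h1, h1', hyn, inner_coords] at e1
  rw [h2, h2', hyn, inner_coords] at e2
  have A1 : σ1 0 * y 0 + σ1 1 * y 1 = -(y 0 ^ 2 + y 1 ^ 2) / 2 := by linarith
  have A2 : σ2 0 * y 0 + σ2 1 * y 1 = -(y 0 ^ 2 + y 1 ^ 2) / 2 := by linarith
  have ha : ⟪σ1, σ1⟫ = ‖σ1‖ ^ 2 := real_inner_self_eq_norm_sq σ1
  have hb : ⟪σ2, σ2⟫ = ‖σ2‖ ^ 2 := real_inner_self_eq_norm_sq σ2
  rw [inner_coords, h1] at ha; rw [inner_coords, h2] at hb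
  have hu : σ1 0 ≠ σ2 0 ∨ σ1 1 ≠ σ2 1 := by
    by_contra h; push_neg at h
    exact hne (by ext i; fin_cases i; exacts [h.1, h.2])
  have yu : (σ1 0 - σ2 0) * y 0 + (σ1 1 - σ2 1) * y 1 = 0 := by linarith
  have su : (σ1 0 - σ2 0) * (σ1 0 + σ2 0) + (σ1 1 - σ2 1) * (σ1 1 + σ2 1) = 0 := by
    linear_combination ha - hb
  have sy : (σ1 0 + σ2 0) * y 0 + (σ1 1 + σ2 1) * y 1 = -(y 0 ^ 2 + y 1 ^ 2) := by linarith
  have hcross : y 0 * (σ1 1 + σ2 1) - y 1 * (σ1 0 + σ2 0) = 0 := by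
    rcases hu with h | h
    · have h0 : (σ1 0 - σ2 0) * (y 0 * (σ1 1 + σ2 1) - y 1 * (σ1 0 + σ2 0)) = 0 := by
        linear_combination (σ1 1 + σ2 1) * yu - y 1 * su
      rcases mul_eq_zero.mp h0 with h' | h'
      · exact absurd (by linarith) h
      · exact h'
    · have h0 : (σ1 1 - σ2 1) * (y 0 * (σ1 1 + σ2 1) - y 1 * (σ1 0 + σ2 0)) = 0 := by
        linear_combination y 0 * su - (σ1 0 + σ2 0) * yu
      rcases mul_eq_zero.mp h0 with h' | h'
      · exact absurd (by linarith) h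
      · exact h'
  have hs0 : σ1 0 + σ2 0 = -y 0 := by
    have h0 : (σ1 0 + σ2 0 + y 0) * (y 0 ^ 2 + y 1 ^ 2) = 0 := by
      linear_combination y 0 * sy - y 1 * hcross
    rcases mul_eq_zero.mp h0 with h' | h' <;> linarith
  have hs1 : σ1 1 + σ2 1 = -y 1 := by
    have h0 : (σ1 1 + σ2 1 + y 1) * (y 0 ^ 2 + y 1 ^ 2) = 0 := by
      linear_combination y 1 * sy + y 0 * hcross
    rcases mul_eq_zero.mp h0 with h' | h' <;> linarith
  ext i; fin_cases i
  · show σ2 0 = (-σ1 - y) 0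
    simp only [PiLp.sub_apply, PiLp.neg_apply]; linarith
  · show σ2 1 = (-σ1 - y) 1
    simp only [PiLp.sub_apply, PiLp.neg_apply]; linarith

/-- characterization of `(Y1 ∩ Y2) \ {0}` in two dimensions. -/
theorem stmt16 (k0 : ℝ) (hk0 : 0 < k0)
    (ν ω : Euc 2) (hν : ‖ν‖ = 1) (hω : ‖ω‖ = 1) :
    (Y1set k0 ν ω e2 ∩ Y2set k0 ν ω e2) \ {0} =
      {y | ∃ η ∈ Shemi k0 e2, -η ∈ Sig1 k0 ν ω ∧
        ∃ σ ∈ Sig2 k0 ν ω, σ ∈ Shemi k0 (-e2) ∧ y = η - σ} := by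
  ext y
  simp only [Set.mem_diff, Set.mem_inter_iff, Set.mem_singleton_iff, Set.mem_setOf_eq,
    Y1set, Y2set]
  constructor
  · rintro ⟨⟨⟨η1, hη1, σ1, hσ1, hy1⟩, ⟨η2, hη2, σ2, hσ2, hy2⟩⟩, hy0⟩
    have hn1 : ‖σ1‖ = k0 := hσ1.1.1
    have hn2 : ‖σ2‖ = k0 := hσ2.1.1
    have hp1 : σ1 + y = η1 := by rw [hy1]; abel
    have hp2 : σ2 + y = η2 := by rw [hy2]; abel
    have hn1' : ‖σ1 + y‖ = k0 := by rw [hp1]; exact hη1.1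
    have hn2' : ‖σ2 + y‖ = k0 := by rw [hp2]; exact hη2.1
    have hss : σ1 ≠ σ2 := by
      rintro rfl; exact hσ1.2 hσ2.2
    have h := two_circle hy0 hn1 hn2 hn1' hn2' hss
    have hσ2e : σ2 = -η1 := by rw [h, hy1]; abel
    have hη2e : η2 = -σ1 := by rw [← hp2, h]; abel
    refine ⟨η2, hη2, ?_, σ2, hσ2, ⟨hn2, ?_⟩, hy2⟩
    · rw [hη2e, neg_neg]; exact hσ1
    · rw [hσ2e, inner_neg_neg]; exact hη1.2
  · rintro ⟨η, hη, hmη, σ, hσ, hσm, rfl⟩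
    refine ⟨⟨⟨-σ, ⟨?_, ?_⟩, -η, hmη, by abel⟩, ⟨η, hη, σ, hσ, rfl⟩⟩, ?_⟩
    · rw [norm_neg]; exact hσm.1
    · rw [show ⟪-σ, e2⟫ = ⟪σ, -e2⟫ by rw [inner_neg_left, inner_neg_right]]
      exact hσm.2
    · intro h0
      have heq : η = σ := sub_eq_zero.mp h0
      have h1 : 0 < ⟪η, e2⟫ := hη.2
      have h2 : 0 < ⟪σ, -e2⟫ := hσm.2
      rw [inner_neg_right] at h2; rw [heq] at h1
      linarith
end

section
/- Let d = 2. Every solution g : ℝ² → ℂ of the homogeneous system vanishes almost everywhere on Y1 ∪ Ỹ with respect to the Lebesgue measure on ℝ²; that is, the set {y ∈ Y1 ∪ Ỹ : g(y) ≠ 0} has Lebesgue measure zero. -/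
open Set MeasureTheory
open scoped RealInnerProductSpace

/-- every solution vanishes almost everywhere on `Y1 ∪ Ỹ` (two dimensions). -/
theorem stmt18 (k0 : ℝ) (hk0 : 0 < k0)
    (ν ω : Euc 2) (hν : ‖ν‖ = 1) (hω : ‖ω‖ = 1)
    (χ : ℝ) (hχ : χ ∈ Set.Ioo (0 : ℝ) 1)
    (b : Euc 2 → ℂ) (hb : BHyp k0 χ ν ω b)
    (g : Euc 2 → ℂ) (hg : SolvesHom k0 ν ω e2 b g) :
    volume {y | y ∈ Y1set k0 ν ω e2 ∪ Ytil k0 ν ω e2 ∧ g y ≠ 0} = 0 := by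
  have hempty : {y | y ∈ Y1set k0 ν ω e2 ∪ Ytil k0 ν ω e2 ∧ g y ≠ 0} = ∅ := by
    ext y
    simp only [Set.mem_setOf_eq, Set.mem_empty_iff_false, iff_false, not_and, not_not]
    rintro (⟨η, hη, σ, hσ, rfl⟩ | ⟨η, hη, hη1, σ, hσ2, hσm, hHσ, rfl⟩)
    · exact (hg η hη).1 σ hσ
    · have hmσ : -σ ∈ Shemi k0 e2 := by
        constructor
        · rw [norm_neg]; exact hσm.1
        · have h := hσm.2
          rw [inner_neg_right] at h
          rwa [inner_neg_left]
      have h1 : g (η - σ) = 0 := by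
        have h := (hg (-σ) hmσ).1 (-η) hη1
        have heq : -σ - -η = η - σ := by abel
        rwa [heq] at h
      have h2 := (hg η hη).2 σ hσ2
      rw [h1, mul_zero, zero_add] at h2
      exact h2
  rw [hempty, measure_empty]
end
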